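/- arXiv:1501.06997 — 2 statements merged into one kernel-verified Lean document; each statement's English description precedes it below -/
import Mathlib

section
/- Let α be an involutory automorphism of a Hamiltonian cycle system H of order 2n+1. Then α fixes every cycle of H (setwise). -/
open Pointwise

variable {V : Type*}

/-- The action of a permutation on a simple graph by relabelling vertices. -/
instance permGraphAction : MulAction (Equiv.Perm V) (SimpleGraph V) where
  smul σ H := H.map σ.toEmbedding
  one_smul H := by
    show H.map (1 : Equiv.Perm V).toEmbedding = H
    ext a b
    simp [SimpleGraph.map_adj]
  mul_smul σ τ H := by
    ext a b
    show (H.map (σ * τ).toEmbedding).Adj a b ↔ ((H.map τ.toEmbedding).map σ.toEmbedding).Adj a b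
    rw [SimpleGraph.map_map]
    rfl

lemma perm_smul_graph (σ : Equiv.Perm V) (H : SimpleGraph V) :
    σ • H = H.map σ.toEmbedding := rfl

/-- A Hamiltonian cycle of the complete graph on `V`: a connected, 2-regular
(spanning) subgraph. -/
def IsHamCycle [Fintype V] (H : SimpleGraph V) : Prop :=
  H.Connected ∧ ∀ v : V, (H.neighborSet v).ncard = 2

/-- A Hamiltonian cycle system: a set of Hamiltonian cycles whose edge sets
partition the edge set of the complete graph. -/
def IsHCS [Fintype V] (𝓗 : Set (SimpleGraph V)) : Prop :=
  (∀ H ∈ 𝓗, IsHamCycle H) ∧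
    ∀ e ∈ (⊤ : SimpleGraph V).edgeSet, ∃! H, H ∈ 𝓗 ∧ e ∈ H.edgeSet

/-- The full automorphism group of a Hamiltonian cycle system, as the subgroup
of vertex permutations preserving the set of cycles. -/
def autHCS (𝓗 : Set (SimpleGraph V)) : Subgroup (Equiv.Perm V) :=
  MulAction.stabilizer (Equiv.Perm V) 𝓗

/-- The cycle graph traced by a map from `ZMod m` (consecutive residues are adjacent). -/
def cycleOn {W : Type*} (m : ℕ) (f : ZMod m → W) : SimpleGraph W :=
  SimpleGraph.fromRel (fun a b => ∃ i : ZMod m, f i = a ∧ f (i + 1) = b)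

/-!
Every cycle of `𝓗` passes through a given vertex `v` using two of the `2n` edges at `v`, and
these pairs partition the edges at `v`, so `𝓗` has exactly `n` cycles. A cycle fixed by an
involution `σ ≠ 1` is reflected by it: labelling its vertices by `ZMod (2n+1)` along the cycle,
`σ` acts as `t ↦ c - t`. Hence `σ` has a unique fixed point `v`, and a fixed cycle contains at
most one edge of the form `{u, σ u}`. Each of the `n` edges `{u, σ u}` with `u ≠ v` lies in some
cycle, which `σ` then fixes, so at least `n` cycles are fixed: all of them.
-/

open SimpleGraph Finset

theorem smul_adj_apply (σ : Equiv.Perm V) (H : SimpleGraph V) {x y : V} :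
    (σ • H).Adj (σ x) (σ y) ↔ H.Adj x y :=
  map_adj_apply (f := σ.toEmbedding)

theorem smul_mem_of_mem_autHCS {𝓗 : Set (SimpleGraph V)} {σ : Equiv.Perm V}
    (hσ : σ ∈ autHCS 𝓗) {K : SimpleGraph V} (hK : K ∈ 𝓗) : σ • K ∈ 𝓗 := by
  rw [← (MulAction.mem_stabilizer_iff.mp hσ : σ • 𝓗 = 𝓗)]
  exact Set.smul_mem_smul_set hK

theorem ZMod.isUnit_two_of_odd {m : ℕ} (hm : Odd m) : IsUnit (2 : ZMod m) := by
  exact_mod_cast (ZMod.isUnit_iff_coprime 2 m).mpr (Nat.coprime_two_left.mpr hm)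

theorem ZMod.exists_two_mul_eq_of_odd {m : ℕ} (hm : Odd m) (c : ZMod m) : ∃ t, 2 * t = c :=
  ⟨(ZMod.isUnit_two_of_odd hm).unit⁻¹ * c, by simp [← mul_assoc]⟩

theorem ZMod.eq_add_or_eq_sub_of_forall_add_one {m : ℕ} [NeZero m] {τ : ZMod m → ZMod m}
    (hstep : ∀ i, τ (i + 1) = τ i + 1 ∨ τ (i + 1) = τ i - 1) (hne : ∀ i, τ (i + 2) ≠ τ i) :
    (∀ t, τ t = τ 0 + t) ∨ ∀ t, τ t = τ 0 - t := by
  have hconst : ∀ i, τ (i + 1 + 1) - τ (i + 1) = τ (i + 1) - τ i := by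
    intro i
    have h2 := hne i
    rw [show i + 2 = i + 1 + 1 by ring] at h2
    rcases hstep i with h | h <;> rcases hstep (i + 1) with h' | h' <;> rw [h', h] at h2 ⊢ <;>
      first | ring1 | exact absurd (by ring) h2
  have hdiff : ∀ k : ℕ, τ (k + 1) - τ k = τ 1 - τ 0 := by
    intro k
    induction k with
    | zero => simp
    | succ k ih => push_cast; rw [hconst, ih]
  have hlin : ∀ k : ℕ, τ k = τ 0 + k * (τ 1 - τ 0) := by
    intro k
    induction k with
    | zero => simp
    | succ k ih => push_cast; linear_combination hdiff k + ih
  rcases hstep 0 with h | h <;> rw [zero_add] at h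
  · exact .inl fun t => by rw [← ZMod.natCast_zmod_val t, hlin, h]; ring
  · exact .inr fun t => by rw [← ZMod.natCast_zmod_val t, hlin, h]; ring

section

variable [Fintype V] {H : SimpleGraph V}

theorem IsHamCycle.exists_equiv_zmod (hH : IsHamCycle H) :
    ∃ g : ZMod (Fintype.card V) ≃ V, ∀ i, H.Adj (g i) (g (i + 1)) := by
  classical
  obtain ⟨v⟩ := hH.1.nonempty
  obtain ⟨p, hp, hverts⟩ :=
    IsCycles.exists_cycle_toSubgraph_verts_eq_connectedComponentSupp (fun w _ => hH.2 w)
      (c := H.connectedComponentMk v) rfl (Set.nonempty_of_ncard_ne_zero (by simp [hH.2 v]))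
  have hmem : ∀ x, x ∈ p.support.tail := fun x => by
    by_cases hxv : x = v
    · exact hxv ▸ Walk.end_mem_tail_support hp.not_nil
    have hx : x ∈ p.support := by
      rw [← Walk.mem_verts_toSubgraph, hverts, ConnectedComponent.mem_supp_iff,
        ConnectedComponent.eq]
      exact hH.1.preconnected x v
    rw [← p.cons_tail_support] at hx
    exact (List.mem_cons.mp hx).resolve_left hxv
  have hlen : p.length = Fintype.card V :=
    (Walk.isHamiltonianCycle_iff_isCycle_and_support_count_tail_eq_one.mpr
      ⟨hp, fun x => List.count_eq_one_of_mem hp.support_nodup (hmem x)⟩).length_eq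
  have h3 := hp.three_le_length
  have : NeZero p.length := ⟨by omega⟩
  rw [← hlen]
  have hinj : Function.Injective fun i : ZMod p.length => p.getVert i.val := fun i j hij =>
    ZMod.val_injective _ <| hp.getVert_injOn'
      (by have := i.val_lt; simp only [Set.mem_ofPred_eq]; omega)
      (by have := j.val_lt; simp only [Set.mem_ofPred_eq]; omega) hij
  refine ⟨Equiv.ofBijective _ ((Fintype.bijective_iff_injective_and_card _).mpr
    ⟨hinj, by simp [hlen]⟩), fun i => ?_⟩
  simp only [Equiv.ofBijective_apply]
  rcases Nat.lt_or_ge (i.val + 1) p.length with hi | hi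
  · rw [ZMod.val_add_of_lt (by rwa [ZMod.val_one'' (by omega)]), ZMod.val_one'' (by omega)]
    exact p.adj_getVert_succ (by omega)
  · have hi' : i.val + 1 = p.length := by have := i.val_lt; omega
    have hzero : i + 1 = 0 := by
      rw [← ZMod.natCast_zmod_val i, ← Nat.cast_add_one, hi', ZMod.natCast_self]
    have := p.adj_getVert_succ (i := i.val) (by omega)
    rw [hzero, ZMod.val_zero, p.getVert_zero]
    rwa [hi', p.getVert_length] at this

theorem IsHamCycle.three_le_card (hH : IsHamCycle H) : 3 ≤ Fintype.card V := by
  obtain ⟨v⟩ := hH.1.nonempty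
  have h := Set.ncard_le_ncard (Set.subset_univ (insert v (H.neighborSet v)))
  rw [Set.ncard_insert_of_notMem (by simp), hH.2 v, Set.ncard_univ, Nat.card_eq_fintype_card] at h
  omega

theorem IsHamCycle.adj_iff (hH : IsHamCycle H) {g : ZMod (Fintype.card V) ≃ V}
    (hg : ∀ i, H.Adj (g i) (g (i + 1))) {i j : ZMod (Fintype.card V)} :
    H.Adj (g i) (g j) ↔ j = i + 1 ∨ j = i - 1 := by
  have hprev : H.Adj (g i) (g (i - 1)) := by simpa using (hg (i - 1)).symm
  refine ⟨fun hij => ?_, by rintro (rfl | rfl); exacts [hg i, hprev]⟩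
  have : Fact (2 < Fintype.card V) := ⟨hH.three_le_card⟩
  have hne : g (i + 1) ≠ g (i - 1) := g.injective.ne fun h =>
    ZMod.neg_one_ne_one (by linear_combination -h)
  have hnbr : H.neighborSet (g i) = {g (i + 1), g (i - 1)} :=
    (Set.eq_of_subset_of_ncard_le (t := H.neighborSet (g i))
      (Set.insert_subset (hg i) (Set.singleton_subset_iff.mpr hprev))
      (by rw [hH.2, Set.ncard_pair hne]) (Set.toFinite _)).symm
  have hj : g j ∈ H.neighborSet (g i) := hij
  simpa [hnbr] using hj

theorem IsHamCycle.exists_reflection (hH : IsHamCycle H) (hodd : Odd (Fintype.card V))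
    {σ : Equiv.Perm V} (hσH : σ • H = H) (hinv : Function.Involutive σ) (hσ : σ ≠ 1) :
    ∃ g : ZMod (Fintype.card V) ≃ V, (∀ i, H.Adj (g i) (g (i + 1))) ∧
      ∃ c, ∀ t, σ (g t) = g (c - t) := by
  obtain ⟨g, hg⟩ := hH.exists_equiv_zmod
  have : Fact (2 < Fintype.card V) := ⟨hH.three_le_card⟩
  have : NeZero (Fintype.card V) := ⟨by have := hH.three_le_card; omega⟩
  set τ := fun t => g.symm (σ (g t))
  have hστ : ∀ t, σ (g t) = g (τ t) := by simp [τ]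
  have hstep : ∀ i, τ (i + 1) = τ i + 1 ∨ τ (i + 1) = τ i - 1 := fun i => by
    have := (smul_adj_apply σ H).mpr (hg i)
    rwa [hσH, hστ, hστ, hH.adj_iff hg] at this
  have hne : ∀ i, τ (i + 2) ≠ τ i := fun i h => ZMod.neg_one_ne_one <| by
    have := g.injective (σ.injective (by rw [hστ, hστ, h] : σ (g (i + 2)) = σ (g i)))
    linear_combination -this
  refine ⟨g, hg, ?_⟩
  rcases ZMod.eq_add_or_eq_sub_of_forall_add_one hstep hne with hrot | hrefl
  · have hτ0 : τ 0 = 0 := (ZMod.isUnit_two_of_odd hodd).mul_left_cancel <| by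
      have h := hinv (g 0)
      rw [hστ, hστ] at h
      have := g.injective h
      rw [hrot (τ 0)] at this
      linear_combination this
    refine absurd (Equiv.ext fun x => ?_) hσ
    rw [← g.apply_symm_apply x, hστ, hrot, hτ0, zero_add, Equiv.Perm.one_apply]
  · exact ⟨τ 0, fun t => by rw [hστ, hrefl]⟩

theorem IsHamCycle.existsUnique_apply_eq_self (hH : IsHamCycle H) (hodd : Odd (Fintype.card V))
    {σ : Equiv.Perm V} (hσH : σ • H = H) (hinv : Function.Involutive σ) (hσ : σ ≠ 1) :
    ∃! v, σ v = v := by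
  obtain ⟨g, -, c, hc⟩ := hH.exists_reflection hodd hσH hinv hσ
  obtain ⟨t, ht⟩ := ZMod.exists_two_mul_eq_of_odd hodd c
  refine ⟨g t, show σ (g t) = g t by rw [hc]; congr 1; linear_combination -ht, fun w hw => ?_⟩
  obtain ⟨s, rfl⟩ := g.surjective w
  rw [hc, g.injective.eq_iff] at hw
  exact congrArg g <| (ZMod.isUnit_two_of_odd hodd).mul_left_cancel (by linear_combination -hw - ht)

theorem IsHamCycle.ncard_setOf_adj_apply_le_two (hH : IsHamCycle H) (hodd : Odd (Fintype.card V))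
    {σ : Equiv.Perm V} (hσH : σ • H = H) (hinv : Function.Involutive σ) (hσ : σ ≠ 1) :
    {u | H.Adj u (σ u)}.ncard ≤ 2 := by
  obtain ⟨g, hg, c, hc⟩ := hH.exists_reflection hodd hσH hinv hσ
  obtain ⟨t, ht⟩ := ZMod.exists_two_mul_eq_of_odd hodd (c - 1)
  have h2 := ZMod.isUnit_two_of_odd hodd
  have hsub : {u | H.Adj u (σ u)} ⊆ {g t, g (t + 1)} := by
    intro u hu
    obtain ⟨s, rfl⟩ := g.surjective u
    rw [Set.mem_ofPred_eq, hc, hH.adj_iff hg] at hu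
    rcases hu with h | h
    · exact .inl (congrArg g (h2.mul_left_cancel (by linear_combination -h - ht)))
    · have hs : s - 1 = t := h2.mul_left_cancel (by linear_combination -h - ht)
      exact .inr (congrArg g (by rw [← hs, sub_add_cancel]))
  exact (Set.ncard_le_ncard hsub).trans <| (Set.ncard_insert_le _ _).trans (by simp)

end

namespace IsHCS

variable [Fintype V] {𝓗 : Set (SimpleGraph V)}

theorem eq_of_adj (h : IsHCS 𝓗) {K K' : SimpleGraph V} (hK : K ∈ 𝓗) (hK' : K' ∈ 𝓗) {x y : V}
    (hKxy : K.Adj x y) (hK'xy : K'.Adj x y) : K = K' :=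
  (h.2 s(x, y) (by simpa using hKxy.ne)).unique ⟨hK, hKxy⟩ ⟨hK', hK'xy⟩

theorem exists_adj (h : IsHCS 𝓗) {x y : V} (hxy : x ≠ y) : ∃ K ∈ 𝓗, K.Adj x y :=
  let ⟨K, ⟨hK, hKxy⟩, _⟩ := h.2 s(x, y) (by simpa using hxy)
  ⟨K, hK, hKxy⟩

theorem smul_eq_self_of_adj_apply (h : IsHCS 𝓗) {σ : Equiv.Perm V} (hσ : σ ∈ autHCS 𝓗)
    (hinv : Function.Involutive σ) {K : SimpleGraph V} (hK : K ∈ 𝓗) {u : V}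
    (hu : K.Adj u (σ u)) : σ • K = K := by
  have hσu := (smul_adj_apply σ K).mpr hu
  rw [hinv u] at hσu
  exact h.eq_of_adj (smul_mem_of_mem_autHCS hσ hK) hK hσu.symm hu

theorem two_mul_ncard_add_one (h : IsHCS 𝓗) [Nonempty V] :
    2 * 𝓗.ncard + 1 = Fintype.card V := by
  classical
  obtain ⟨v⟩ := ‹Nonempty V›
  set F := (Set.toFinite 𝓗).toFinset
  have hcover : F.biUnion (fun K => univ.filter (K.Adj v)) = univ.erase v := by
    ext w
    simp only [F, mem_biUnion, Set.Finite.mem_toFinset, mem_filter, mem_univ, true_and,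
      mem_erase, and_true]
    exact ⟨fun ⟨K, _, hK⟩ => hK.ne', fun hw => h.exists_adj (Ne.symm hw)⟩
  have hdisj : (F : Set (SimpleGraph V)).PairwiseDisjoint (fun K => univ.filter (K.Adj v)) :=
    fun K hK K' hK' hne => disjoint_left.mpr fun w hw hw' => hne <|
      h.eq_of_adj (by simpa [F] using hK) (by simpa [F] using hK')
        (mem_filter.mp hw).2 (mem_filter.mp hw').2
  have htwo : ∀ K ∈ F, #(univ.filter (K.Adj v)) = 2 := fun K hK => by
    rw [← (h.1 K (by simpa [F] using hK)).2 v, ← Set.ncard_coe_finset]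
    congr 1
    ext w
    simp
  rw [Set.ncard_eq_toFinset_card 𝓗, ← Finset.card_univ, ← card_erase_add_one (mem_univ v),
    ← hcover, card_biUnion hdisj, sum_const_nat htwo, mul_comm]

theorem ncard_le_ncard_smul_eq_self (h : IsHCS 𝓗) (hodd : Odd (Fintype.card V))
    {σ : Equiv.Perm V} (hσ : σ ∈ autHCS 𝓗) (hinv : Function.Involutive σ) (hσ1 : σ ≠ 1) :
    𝓗.ncard ≤ {K ∈ 𝓗 | σ • K = K}.ncard := by
  classical
  obtain ⟨u₀, hu₀⟩ : ∃ u, σ u ≠ u := by simpa [Equiv.ext_iff] using hσ1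
  obtain ⟨K₀, hK₀, hK₀u⟩ := h.exists_adj (Ne.symm hu₀)
  obtain ⟨v, -, hv⟩ := (h.1 K₀ hK₀).existsUnique_apply_eq_self hodd
    (h.smul_eq_self_of_adj_apply hσ hinv hK₀ hK₀u) hinv hσ1
  have : Nonempty V := ⟨v⟩
  set F := (Set.toFinite {K ∈ 𝓗 | σ • K = K}).toFinset
  have hcover : univ.erase v ⊆ F.biUnion fun K => univ.filter fun u => K.Adj u (σ u) := by
    intro u hu
    obtain ⟨K, hK, hKu⟩ := h.exists_adj fun hu' => (mem_erase.mp hu).1 (hv u hu'.symm)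
    simpa [F] using ⟨K, ⟨hK, h.smul_eq_self_of_adj_apply hσ hinv hK hKu⟩, hKu⟩
  have hle : ∀ K ∈ F, #(univ.filter fun u => K.Adj u (σ u)) ≤ 2 := fun K hK => by
    obtain ⟨hK, hKσ⟩ : K ∈ 𝓗 ∧ σ • K = K := by simpa [F] using hK
    rw [← Set.ncard_coe_finset, coe_filter]
    simpa using (h.1 K hK).ncard_setOf_adj_apply_le_two hodd hKσ hinv hσ1
  have hcard := h.two_mul_ncard_add_one
  have : 2 * 𝓗.ncard ≤ 2 * {K ∈ 𝓗 | σ • K = K}.ncard :=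
    calc 2 * 𝓗.ncard = #(univ.erase v) := by
          rw [card_erase_of_mem (mem_univ v), card_univ]; omega
      _ ≤ #(F.biUnion fun K => univ.filter fun u => K.Adj u (σ u)) := card_le_card hcover
      _ ≤ ∑ K ∈ F, #(univ.filter fun u => K.Adj u (σ u)) := card_biUnion_le
      _ ≤ #F • 2 := sum_le_card_nsmul _ _ _ hle
      _ = 2 * {K ∈ 𝓗 | σ • K = K}.ncard := by
          rw [Set.ncard_eq_toFinset_card _, smul_eq_mul, mul_comm]
  omega

end IsHCS

/-- an involutory automorphism of an HCS of order `2n+1` fixes every cycle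
setwise. -/
theorem involution_fixes_cycles [Fintype V] (n : ℕ) (hV : Fintype.card V = 2 * n + 1)
    (𝓗 : Set (SimpleGraph V)) (h : IsHCS 𝓗) (σ : Equiv.Perm V)
    (hmem : σ ∈ autHCS 𝓗) (hord : orderOf σ = 2) :
    ∀ H ∈ 𝓗, σ • H = H := by
  have hodd : Odd (Fintype.card V) := hV ▸ odd_two_mul_add_one n
  have hσ1 : σ ≠ 1 := fun h1 => by simp [h1] at hord
  have hinv : Function.Involutive σ := fun x => by
    rw [← Equiv.Perm.mul_apply, ← sq, ← hord, pow_orderOf_eq_one, Equiv.Perm.one_apply]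
  have hfixed : {K ∈ 𝓗 | σ • K = K} = 𝓗 := Set.eq_of_subset_of_ncard_le (Set.sep_subset _ _)
    (h.ncard_le_ncard_smul_eq_self hodd hmem hinv hσ1)
  intro H hH
  exact (hfixed.symm ▸ hH : H ∈ {K ∈ 𝓗 | σ • K = K}).2
end

section
/- If a group has two distinct involutions that both fix every Hamiltonian cycle of an HCS of order 2n+1 setwise, with fixed points a and b respectively, then the subgroup generated by the two involutions acts on the cycle containing the edge {a,b} as the full dihedral group of order 2(2n+1). -/
/-!
A connected 2-regular graph on `2n+1` vertices is a single cycle, so `C` can be labelled by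
`ZMod (2n+1)` with `a ↦ 0` and `b ↦ 1`. An automorphism of `C` fixing both ends of an edge is
trivial, so the nontrivial automorphism `α` fixing `a` is the reflection `z ↦ -z` and `β` is
`z ↦ 2 - z`. Their product is the rotation `z ↦ z - 2`, of order `2n+1` since `2n+1` is odd, and
two involutions whose product has order `m` generate a copy of the dihedral group of order `2m`.
-/

open Pointwise

variable {V : Type*}

section Involutions

variable {G : Type*} [Group G] {s t : G}

lemma zpow_zmod_cast_of_pow_eq_one {n : ℕ} {ρ : G} (hρ : ρ ^ n = 1) {i : ZMod n} {k : ℤ}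
    (hk : (k : ZMod n) = i) : ρ ^ (i.cast : ℤ) = ρ ^ k := by
  rw [zpow_eq_zpow_iff_modEq]
  refine Int.ModEq.of_dvd (Int.natCast_dvd_natCast.mpr (orderOf_dvd_of_pow_eq_one hρ)) ?_
  rw [← ZMod.intCast_eq_intCast_iff, ZMod.intCast_zmod_cast, hk]

lemma zpow_mul_eq_mul_zpow_neg (hs : s * s = 1) (ht : t * t = 1) (k : ℤ) :
    (s * t) ^ k * s = s * (s * t) ^ (-k) := by
  have hconj : s * (s * t) * s⁻¹ = (s * t)⁻¹ := by
    rw [mul_inv_rev, inv_eq_of_mul_eq_one_right ht, inv_eq_of_mul_eq_one_right hs,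
      ← mul_assoc, hs, one_mul]
  rw [zpow_neg, ← inv_zpow, ← hconj, conj_zpow, ← mul_assoc, ← mul_assoc, hs, one_mul,
    inv_eq_of_mul_eq_one_right hs]

lemma mul_zpow_ne_one (hs : s * s = 1) (ht : t * t = 1) (hs1 : s ≠ 1) (ht1 : t ≠ 1) (k : ℤ) :
    s * (s * t) ^ k ≠ 1 := by
  intro h
  have hsk : (s * t) ^ k = s :=
    (eq_inv_of_mul_eq_one_right h).trans (inv_eq_of_mul_eq_one_right hs)
  have hcomm := (Commute.refl (s * t)).zpow_left k
  rw [hsk] at hcomm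
  -- `s` commutes with `s * t` and also inverts it
  have hsq : (s * t) ^ 2 = 1 := by
    have := zpow_mul_eq_mul_zpow_neg hs ht 1
    rw [zpow_one, ← hcomm.eq, zpow_neg_one] at this
    rw [sq, mul_eq_one_iff_eq_inv]
    exact mul_left_cancel this
  obtain ⟨j, rfl | rfl⟩ := Int.even_or_odd' k
  · rw [zpow_mul, zpow_ofNat, hsq, one_zpow] at hsk
    exact hs1 hsk.symm
  · rw [zpow_add_one, zpow_mul, zpow_ofNat, hsq, one_zpow, one_mul, mul_eq_left] at hsk
    exact ht1 hsk

end Involutions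

namespace DihedralGroup

variable {G : Type*} [Group G] {n : ℕ}

def lift (s t : G) (hs : s * s = 1) (ht : t * t = 1) (hst : (s * t) ^ n = 1) :
    DihedralGroup n →* G where
  toFun
    | r i => (s * t) ^ (i.cast : ℤ)
    | sr i => s * (s * t) ^ (i.cast : ℤ)
  map_one' := by
    rw [one_def]
    simp
  map_mul' := by
    have cast_eq (i : ZMod n) (k : ℤ) (hk : (k : ZMod n) = i) :=
      zpow_zmod_cast_of_pow_eq_one hst hk
    rintro (i | i) (j | j)
    · simp only [r_mul_r]
      rw [cast_eq (i + j) (i.cast + j.cast) (by push_cast; ring), zpow_add]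
    · simp only [r_mul_sr]
      rw [← mul_assoc, zpow_mul_eq_mul_zpow_neg hs ht, mul_assoc, ← zpow_add,
        cast_eq (j - i) (-i.cast + j.cast) (by push_cast; ring)]
    · simp only [sr_mul_r]
      rw [mul_assoc, ← zpow_add, cast_eq (i + j) (i.cast + j.cast) (by push_cast; ring)]
    · simp only [sr_mul_sr]
      rw [mul_assoc, ← mul_assoc _ s, zpow_mul_eq_mul_zpow_neg hs ht, ← mul_assoc,
        ← mul_assoc, hs, one_mul, ← zpow_add,
        cast_eq (j - i) (-i.cast + j.cast) (by push_cast; ring)]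

variable {s t : G} (hs : s * s = 1) (ht : t * t = 1) (hst : (s * t) ^ n = 1)

lemma range_lift : (lift s t hs ht hst).range = Subgroup.closure {s, t} := by
  have hsmem : s ∈ Subgroup.closure {s, t} := Subgroup.subset_closure (by simp)
  have htmem : t ∈ Subgroup.closure {s, t} := Subgroup.subset_closure (by simp)
  apply le_antisymm
  · rintro _ ⟨i | i, rfl⟩
    · exact zpow_mem (mul_mem hsmem htmem) _
    · exact mul_mem hsmem (zpow_mem (mul_mem hsmem htmem) _)
  · rw [Subgroup.closure_le, Set.insert_subset_iff, Set.singleton_subset_iff]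
    refine ⟨⟨sr 0, ?_⟩, ⟨sr 1, ?_⟩⟩
    · change s * (s * t) ^ ((0 : ZMod n).cast : ℤ) = s
      rw [zpow_zmod_cast_of_pow_eq_one hst (k := 0) Int.cast_zero, zpow_zero, mul_one]
    · change s * (s * t) ^ ((1 : ZMod n).cast : ℤ) = t
      rw [zpow_zmod_cast_of_pow_eq_one hst (k := 1) Int.cast_one, zpow_one, ← mul_assoc, hs,
        one_mul]

lemma injective_lift (hn : orderOf (s * t) = n) (hs1 : s ≠ 1) (ht1 : t ≠ 1) :
    Function.Injective (lift s t hs ht hst) := by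
  refine (injective_iff_map_eq_one _).mpr ?_
  rintro (i | i) h
  · change (s * t) ^ (i.cast : ℤ) = 1 at h
    rw [← orderOf_dvd_iff_zpow_eq_one, hn, ← ZMod.intCast_zmod_eq_zero_iff_dvd,
      ZMod.intCast_zmod_cast] at h
    rw [h, r_zero]
  · exact absurd h (mul_zpow_ne_one hs ht hs1 ht1 _)

end DihedralGroup

open DihedralGroup in
theorem nonempty_closure_pair_mulEquiv_dihedralGroup {G : Type*} [Group G] {s t : G}
    (hs : orderOf s = 2) (ht : orderOf t = 2) :
    Nonempty (Subgroup.closure {s, t} ≃* DihedralGroup (orderOf (s * t))) := by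
  have hs2 : s * s = 1 := by rw [← sq, ← hs, pow_orderOf_eq_one]
  have ht2 : t * t = 1 := by rw [← sq, ← ht, pow_orderOf_eq_one]
  have hs1 : s ≠ 1 := by rintro rfl; simp at hs
  have ht1 : t ≠ 1 := by rintro rfl; simp at ht
  have hinj := injective_lift hs2 ht2 (pow_orderOf_eq_one _) rfl hs1 ht1
  exact ⟨(MulEquiv.subgroupCongr (range_lift hs2 ht2 _).symm).trans
    (MonoidHom.ofInjective hinj).symm⟩

namespace SimpleGraph

variable {C : SimpleGraph V}

lemma Adj.perm_of_smul_eq {σ : Equiv.Perm V} (hσ : σ • C = C) {u v : V} (h : C.Adj u v) :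
    C.Adj (σ u) (σ v) := by
  have := (map_adj_apply (f := σ.toEmbedding)).mpr h
  rwa [← perm_smul_graph, hσ] at this

lemma IsCycles.eq_or_eq_of_adj (hC : C.IsCycles) {v u w x : V} (hu : C.Adj v u) (hw : C.Adj v w)
    (huw : u ≠ w) (hx : C.Adj v x) : x = u ∨ x = w := by
  obtain ⟨w', -, huniq⟩ := hC.existsUnique_ne_adj hu
  by_cases hxu : x = u
  · exact .inl hxu
  · exact .inr ((huniq x ⟨Ne.symm hxu, hx⟩).trans (huniq w ⟨huw, hw⟩).symm)

lemma IsCycles.eq_one_of_fixes_adj (hC : C.IsCycles) (hconn : C.Connected) {σ : Equiv.Perm V}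
    (hσ : ∀ ⦃u v⦄, C.Adj u v → C.Adj (σ u) (σ v)) {a b : V} (hab : C.Adj a b)
    (ha : σ a = a) (hb : σ b = b) : σ = 1 := by
  have propagate : ∀ ⦃v w⦄, C.Adj v w → (σ v = v ∧ ∃ u, C.Adj v u ∧ σ u = u) →
      σ w = w ∧ ∃ u, C.Adj w u ∧ σ u = u := by
    rintro v w hvw ⟨hv, u, hvu, hu⟩
    refine ⟨?_, v, hvw.symm, hv⟩
    by_cases hwu : w = u
    · rwa [hwu]
    have hvσw : C.Adj v (σ w) := hv ▸ hσ hvw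
    rcases hC.eq_or_eq_of_adj hvu hvw (Ne.symm hwu) hvσw with h | h
    · exact absurd (σ.injective (h.trans hu.symm)) hwu
    · exact h
  ext v
  suffices σ v = v ∧ ∃ u, C.Adj v u ∧ σ u = u from this.1
  induction (reachable_iff_reflTransGen a v).mp (hconn a v) with
  | refl => exact ⟨ha, b, hab, hb⟩
  | tail _ hvw ih => exact propagate hvw ih

lemma IsCycles.exists_isHamiltonianCycle [Finite V] [DecidableEq V] (hC : C.IsCycles)
    (hconn : C.Connected) {a b : V} (hab : C.Adj a b) :
    ∃ p : C.Walk a a, p.IsHamiltonianCycle := by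
  obtain ⟨p, hp, hverts⟩ := hC.exists_cycle_toSubgraph_verts_eq_connectedComponentSupp
    (c := C.connectedComponentMk a) rfl ⟨b, hab⟩
  refine ⟨p, Walk.isHamiltonianCycle_iff_isCycle_and_support_count_tail_eq_one.mpr
    ⟨hp, fun v => List.count_eq_one_of_mem hp.support_nodup ?_⟩⟩
  have hv : v ∈ p.toSubgraph.verts := by
    rw [hverts, ConnectedComponent.mem_supp_iff, ConnectedComponent.eq]
    exact hconn v a
  rw [Walk.mem_verts_toSubgraph, Walk.mem_support_iff] at hv
  rcases hv with rfl | hv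
  · exact p.end_mem_tail_support hp.not_nil
  · exact hv

lemma Walk.IsHamiltonianCycle.exists_equiv_zmod [Fintype V] [DecidableEq V] {a : V}
    {p : C.Walk a a} (hp : p.IsHamiltonianCycle) :
    ∃ f : ZMod (Fintype.card V) ≃ V, f 0 = a ∧ ∀ z, C.Adj (f z) (f (z + 1)) := by
  set m := Fintype.card V
  have hlen : p.length = m := hp.length_eq
  have : NeZero m := ⟨by have := hp.three_le_length; omega⟩
  set g : ZMod m → V := fun z => p.getVert z.val
  have hg : ∀ i ≤ m, g i = p.getVert i := by
    intro i hi
    rcases hi.lt_or_eq with hi | rfl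
    · simp [g, ZMod.val_natCast, Nat.mod_eq_of_lt hi]
    · simp [g, ← hlen]
  have hinj : Function.Injective g := fun x y hxy =>
    ZMod.val_injective m (hp.getVert_injOn' (by have := ZMod.val_lt x; simp; omega)
      (by have := ZMod.val_lt y; simp; omega) hxy)
  have hbij : Function.Bijective g :=
    (Fintype.bijective_iff_injective_and_card g).mpr ⟨hinj, ZMod.card m⟩
  refine ⟨Equiv.ofBijective g hbij, by simp [g], fun z => ?_⟩
  have hz := ZMod.val_lt z
  simp only [Equiv.ofBijective_apply]
  rw [← ZMod.natCast_zmod_val z, ← Nat.cast_succ, hg _ hz, hg _ hz.le]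
  exact p.adj_getVert_succ (by rw [hlen]; exact hz)

end SimpleGraph

section CycleOn

variable {m : ℕ}

lemma cycleOn_adj_apply {f : ZMod m → V} (hf : Function.Injective f) (h1 : (1 : ZMod m) ≠ 0)
    {x y : ZMod m} : (cycleOn m f).Adj (f x) (f y) ↔ y = x + 1 ∨ x = y + 1 := by
  simp only [cycleOn, SimpleGraph.fromRel_adj, hf.eq_iff, exists_eq_left, ne_eq]
  constructor
  · rintro ⟨-, h | h⟩
    exacts [.inl h.symm, .inr h.symm]
  · rintro (rfl | rfl)
    · exact ⟨fun h => h1 (by simpa using h), .inl rfl⟩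
    · exact ⟨fun h => h1 (by simpa using h.symm), .inr rfl⟩

lemma cycleOn_adj_permCongr_subLeft (f : ZMod m ≃ V) (h1 : (1 : ZMod m) ≠ 0) (c : ZMod m)
    {u v : V} (h : (cycleOn m f).Adj u v) :
    (cycleOn m f).Adj (f.permCongr (Equiv.subLeft c) u) (f.permCongr (Equiv.subLeft c) v) := by
  obtain ⟨x, rfl⟩ := f.surjective u
  obtain ⟨y, rfl⟩ := f.surjective v
  simp only [Equiv.permCongr_apply, Equiv.symm_apply_apply, Equiv.subLeft_apply]
  rw [cycleOn_adj_apply f.injective h1] at h ⊢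
  rcases h with rfl | rfl
  · exact .inr (by ring)
  · exact .inl (by ring)

end CycleOn

namespace SimpleGraph

variable {C : SimpleGraph V}

lemma IsCycles.eq_cycleOn (hC : C.IsCycles) {m : ℕ} (f : ZMod m ≃ V) (h2 : (2 : ZMod m) ≠ 0)
    (hf : ∀ z, C.Adj (f z) (f (z + 1))) : C = cycleOn m f := by
  have h1 : (1 : ZMod m) ≠ 0 := fun h => h2 (by rw [← one_add_one_eq_two, h, add_zero])
  ext u v
  obtain ⟨x, rfl⟩ := f.surjective u
  obtain ⟨y, rfl⟩ := f.surjective v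
  rw [cycleOn_adj_apply f.injective h1]
  constructor
  · intro hxy
    have hprev : C.Adj (f x) (f (x - 1)) := by simpa using (hf (x - 1)).symm
    have hne : f (x + 1) ≠ f (x - 1) :=
      f.injective.ne fun h => h2 (by linear_combination h)
    rcases hC.eq_or_eq_of_adj (hf x) hprev hne hxy with h | h
    · exact .inl (f.injective h)
    · exact .inr (by rw [f.injective h, sub_add_cancel])
  · rintro (rfl | rfl)
    · exact hf x
    · exact (hf y).symm

theorem IsCycles.exists_equiv_zmod_eq_cycleOn [Fintype V] (hC : C.IsCycles)
    (hconn : C.Connected) {a b : V} (hab : C.Adj a b) :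
    ∃ f : ZMod (Fintype.card V) ≃ V,
      f 0 = a ∧ f 1 = b ∧ C = cycleOn (Fintype.card V) f := by
  classical
  obtain ⟨p, hp⟩ := hC.exists_isHamiltonianCycle hconn hab
  obtain ⟨g, hg0, hg⟩ := hp.exists_equiv_zmod
  have h2 : (2 : ZMod (Fintype.card V)) ≠ 0 := by
    have h3 := hp.three_le_length
    rw [hp.length_eq] at h3
    rw [← Nat.cast_ofNat, Ne, ZMod.natCast_eq_zero_iff]
    exact fun h => absurd (Nat.le_of_dvd two_pos h) (by omega)
  have h1 : (1 : ZMod (Fintype.card V)) ≠ 0 :=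
    fun h => h2 (by rw [← one_add_one_eq_two, h, add_zero])
  have hCg := hC.eq_cycleOn g h2 hg
  obtain ⟨y, rfl⟩ := g.surjective b
  rw [hCg, ← hg0, cycleOn_adj_apply g.injective h1, zero_add] at hab
  rcases hab with rfl | hy
  · exact ⟨g, hg0, rfl, hCg⟩
  · refine ⟨(Equiv.neg _).trans g, by simpa using hg0, ?_, hC.eq_cycleOn _ h2 fun z => ?_⟩
    · simp [eq_neg_of_add_eq_zero_left hy.symm]
    · simpa only [Equiv.trans_apply, Equiv.neg_apply, neg_add', sub_add_cancel] using
        (hg (-z - 1)).symm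

lemma IsCycles.eq_permCongr_subLeft (hC : C.IsCycles) (hconn : C.Connected) {m : ℕ}
    {f : ZMod m ≃ V} (hf : C = cycleOn m f) (h1 : (1 : ZMod m) ≠ 0) {σ : Equiv.Perm V}
    (hσ : ∀ ⦃u v⦄, C.Adj u v → C.Adj (σ u) (σ v)) (hσ1 : σ ≠ 1) {c : ZMod m}
    (hc : σ (f c) = f c) : σ = f.permCongr (Equiv.subLeft (c + c)) := by
  set ρ := f.permCongr (Equiv.subLeft (c + c))
  have hρ : ∀ ⦃u v⦄, C.Adj u v → C.Adj (ρ u) (ρ v) := by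
    subst hf
    exact fun u v => cycleOn_adj_permCongr_subLeft f h1 _
  have hρρ : ρ * ρ = 1 := by
    ext v
    simp [ρ]
  have hcc1 : C.Adj (f c) (f (c + 1)) := by
    rw [hf, cycleOn_adj_apply f.injective h1]
    exact .inl rfl
  obtain ⟨y, hy⟩ := f.surjective (σ (f (c + 1)))
  have hcy := hσ hcc1
  rw [hc, ← hy, hf, cycleOn_adj_apply f.injective h1] at hcy
  rcases hcy with rfl | hcy
  · exact absurd (hC.eq_one_of_fixes_adj hconn hσ hcc1 hc hy.symm) hσ1
  · have hρσ : ρ * σ = 1 := by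
      refine hC.eq_one_of_fixes_adj hconn (fun u v huv => hρ (hσ huv)) hcc1 ?_ ?_
      · simp [ρ, hc]
      · rw [Equiv.Perm.mul_apply, ← hy]
        simp only [ρ, Equiv.permCongr_apply, Equiv.symm_apply_apply, Equiv.subLeft_apply]
        congr 1
        rw [hcy]
        ring
    rw [eq_inv_of_mul_eq_one_right hρσ, inv_eq_of_mul_eq_one_right hρρ]

end SimpleGraph

lemma Equiv.orderOf_addRight {G : Type*} [AddGroup G] (c : G) :
    orderOf (Equiv.addRight c) = addOrderOf c := by
  rw [← orderOf_ofAdd_eq_addOrderOf, orderOf_eq_orderOf_iff]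
  intro k
  rw [Equiv.nsmul_addRight, ← ofAdd_nsmul, ofAdd_eq_one]
  constructor
  · intro h
    simpa using congr($h 0)
  · intro h
    rw [h, Equiv.addRight_zero]

lemma orderOf_permCongr_subLeft_mul {G : Type*} [AddCommGroup G] (f : G ≃ V) (c d : G) :
    orderOf (f.permCongr (Equiv.subLeft c) * f.permCongr (Equiv.subLeft d)) =
      addOrderOf (c - d) := by
  rw [← Equiv.permCongrHom_coe, ← map_mul, MulEquiv.orderOf_eq, ← Equiv.orderOf_addRight]
  congr 1
  ext z
  simp only [Equiv.Perm.mul_apply, Equiv.subLeft_apply, Equiv.coe_addRight]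
  abel

theorem two_involutions_generate_dihedral_general [Fintype V] (n : ℕ)
    (hV : Fintype.card V = 2 * n + 1)
    (𝓗 : Set (SimpleGraph V)) (h : IsHCS 𝓗) (α β : Equiv.Perm V)
    (hα : orderOf α = 2) (hβ : orderOf β = 2)
    (hαfix : ∀ H ∈ 𝓗, α • H = H) (hβfix : ∀ H ∈ 𝓗, β • H = H)
    (a b : V) (ha : α a = a) (hb : β b = b)
    (C : SimpleGraph V) (hC : C ∈ 𝓗) (hab : C.Adj a b) :
    (∀ σ ∈ Subgroup.closure {α, β}, σ • C = C) ∧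
      Nonempty (↥(Subgroup.closure {α, β} : Subgroup (Equiv.Perm V)) ≃*
        DihedralGroup (2 * n + 1)) := by
  have hαC := hαfix C hC
  have hβC := hβfix C hC
  have hstab : Subgroup.closure {α, β} ≤ MulAction.stabilizer (Equiv.Perm V) C := by
    rw [Subgroup.closure_le, Set.insert_subset_iff, Set.singleton_subset_iff]
    exact ⟨hαC, hβC⟩
  refine ⟨fun σ hσ => hstab hσ, ?_⟩
  obtain ⟨hconn, hdeg⟩ := h.1 C hC
  have hcyc : C.IsCycles := fun v _ => hdeg v
  obtain ⟨f, hfa, hfb, hf⟩ := hcyc.exists_equiv_zmod_eq_cycleOn hconn hab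
  have : Fact (1 < Fintype.card V) := ⟨Fintype.one_lt_card_iff.mpr ⟨a, b, hab.ne⟩⟩
  have hα' : α = f.permCongr (Equiv.subLeft (0 + 0)) :=
    hcyc.eq_permCongr_subLeft hconn hf one_ne_zero (fun _ _ huv => huv.perm_of_smul_eq hαC)
      (by rintro rfl; simp at hα) (by rw [hfa, ha])
  have hβ' : β = f.permCongr (Equiv.subLeft (1 + 1)) :=
    hcyc.eq_permCongr_subLeft hconn hf one_ne_zero (fun _ _ huv => huv.perm_of_smul_eq hβC)
      (by rintro rfl; simp at hβ) (by rw [hfb, hb])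
  have horder : orderOf (α * β) = 2 * n + 1 := by
    rw [hα', hβ', orderOf_permCongr_subLeft_mul, add_zero, zero_sub, addOrderOf_neg,
      one_add_one_eq_two, ← Nat.cast_ofNat, ZMod.addOrderOf_coe _ (by omega), hV,
      (odd_two_mul_add_one n).coprime_two_right.gcd_eq_one, Nat.div_one]
  rw [← horder]
  exact nonempty_closure_pair_mulEquiv_dihedralGroup hα hβ

/-- two distinct involutory automorphisms fixing every cycle setwise, with
fixed points `a` and `b`, generate a group acting on the cycle through the edge `{a,b}`
as the full dihedral group of order `2(2n+1)`. -/
theorem two_involutions_generate_dihedral [Fintype V] (n : ℕ)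
    (hV : Fintype.card V = 2 * n + 1)
    (𝓗 : Set (SimpleGraph V)) (h : IsHCS 𝓗) (α β : Equiv.Perm V)
    (hαm : α ∈ autHCS 𝓗) (hβm : β ∈ autHCS 𝓗)
    (hα : orderOf α = 2) (hβ : orderOf β = 2) (hne : α ≠ β)
    (hαfix : ∀ H ∈ 𝓗, α • H = H) (hβfix : ∀ H ∈ 𝓗, β • H = H)
    (a b : V) (ha : α a = a) (hb : β b = b)
    (C : SimpleGraph V) (hC : C ∈ 𝓗) (hab : C.Adj a b) :
    (∀ σ ∈ Subgroup.closure {α, β}, σ • C = C) ∧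
      Nonempty (↥(Subgroup.closure {α, β} : Subgroup (Equiv.Perm V)) ≃*
        DihedralGroup (2 * n + 1)) :=
  two_involutions_generate_dihedral_general n hV 𝓗 h α β hα hβ hαfix hβfix a b ha hb C hC hab
end
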